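/- Explicit Koszul contraction (the one-variable case of the Koszul duality between the polynomial ring and the exterior algebra). Let T = F2[X,Y] and regard multiplication by X + Y, m : T → T, m(t) = (X+Y)·t, as a two-term chain complex with a copy of T in homological degrees 1 and 0. Let ev : T → F2[Y] be the F2-algebra homomorphism with ev(X) = Y and ev(Y) = Y, let ι : F2[Y] → T be the inclusion, and let H : T → T be the F2-linear map determined on monomials by H(X^i Y^j) = Σ_{k=0}^{i-1} X^k Y^{i+j-1-k} (so H(Y^j) = 0). Then: (1) ev ∘ m = 0; (2) ev ∘ ι = id on F2[Y]; (3) m ∘ H = id_T + ι ∘ ev; (4) H ∘ m = id_T; (5) H ∘ ι = 0. In particular m is injective (split by H), ev induces an isomorphism coker(m) ≅ F2[Y], and the two-term complex admits a strong deformation retraction onto F2[Y] concentrated in degree 0. -/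

import Mathlib

local notation "Xv" => (MvPolynomial.X 0 : MvPolynomial (Fin 2) (ZMod 2))
local notation "Yv" => (MvPolynomial.X 1 : MvPolynomial (Fin 2) (ZMod 2))

/-- The evaluation map `ev : F₂[X,Y] → F₂[Y]`, `X ↦ Y`, `Y ↦ Y`. -/
noncomputable def koszulEv : MvPolynomial (Fin 2) (ZMod 2) →ₐ[ZMod 2] Polynomial (ZMod 2) :=
  MvPolynomial.aeval fun _ => Polynomial.X

/-- The inclusion `ι : F₂[Y] → F₂[X,Y]`. -/
noncomputable def koszulIncl : Polynomial (ZMod 2) →ₐ[ZMod 2] MvPolynomial (Fin 2) (ZMod 2) :=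
  Polynomial.aeval (MvPolynomial.X 1)

lemma koszul_two_eq_zero : (2 : MvPolynomial (Fin 2) (ZMod 2)) = 0 := by
  exact_mod_cast CharP.cast_eq_zero (MvPolynomial (Fin 2) (ZMod 2)) 2

lemma koszul_monomial_eq (u : Fin 2 →₀ ℕ) (a : ZMod 2) :
    (MvPolynomial.monomial u a : MvPolynomial (Fin 2) (ZMod 2))
      = a • (Xv ^ u 0 * Yv ^ u 1) := by
  rw [MvPolynomial.monomial_eq, Finsupp.prod_fintype _ _ (fun i => pow_zero _),
    Fin.prod_univ_two, MvPolynomial.smul_eq_C_mul]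

lemma koszulEv_mono (i j : ℕ) : koszulEv (Xv ^ i * Yv ^ j) = Polynomial.X ^ (i + j) := by
  simp [koszulEv, pow_add]

lemma koszulIncl_pow (n : ℕ) : koszulIncl (Polynomial.X ^ n) = Yv ^ n := by
  simp [koszulIncl]

/-- Explicit Koszul contraction: the two-term complex `T → T` given by multiplication by
`X + Y` admits a strong deformation retraction onto `F₂[Y]`, with explicit homotopy `H`. -/
theorem koszul_contraction
    (m : MvPolynomial (Fin 2) (ZMod 2) →ₗ[ZMod 2] MvPolynomial (Fin 2) (ZMod 2))
    (hm : ∀ t, m t = (Xv + Yv) * t)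
    (H : MvPolynomial (Fin 2) (ZMod 2) →ₗ[ZMod 2] MvPolynomial (Fin 2) (ZMod 2))
    (hH : ∀ i j : ℕ, H (Xv ^ i * Yv ^ j) =
      ∑ k ∈ Finset.range i, Xv ^ k * Yv ^ (i + j - 1 - k)) :
    (∀ t, koszulEv (m t) = 0) ∧
    (∀ p, koszulEv (koszulIncl p) = p) ∧
    (∀ t, m (H t) = t + koszulIncl (koszulEv t)) ∧
    (∀ t, H (m t) = t) ∧
    (∀ p, H (koszulIncl p) = 0) ∧
    Function.Injective m := by
  have h2 := koszul_two_eq_zero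
  -- (1)
  have p1 : ∀ t, koszulEv (m t) = 0 := by
    intro t
    rw [hm, map_mul, map_add]
    have : koszulEv Xv + koszulEv Yv = 0 := by
      simp [koszulEv]
      linear_combination (Polynomial.X : Polynomial (ZMod 2)) *
        (by exact_mod_cast CharP.cast_eq_zero (Polynomial (ZMod 2)) 2 : (2 : Polynomial (ZMod 2)) = 0)
    rw [this, zero_mul]
  -- (2)
  have p2 : ∀ p, koszulEv (koszulIncl p) = p := by
    have : koszulEv.comp koszulIncl = AlgHom.id (ZMod 2) (Polynomial (ZMod 2)) :=
      Polynomial.algHom_ext (by simp [koszulEv, koszulIncl])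
    intro p
    exact AlgHom.congr_fun this p
  -- monomial computation for (3)
  have mono3 : ∀ i j : ℕ, m (H (Xv ^ i * Yv ^ j))
      = Xv ^ i * Yv ^ j + koszulIncl (koszulEv (Xv ^ i * Yv ^ j)) := by
    intro i j
    rw [hH, hm, koszulEv_mono, koszulIncl_pow]
    set g : ℕ → MvPolynomial (Fin 2) (ZMod 2) := fun k => Xv ^ k * Yv ^ (i + j - k) with hg
    have hA' : ∀ k ∈ Finset.range i, Xv * (Xv ^ k * Yv ^ (i + j - 1 - k)) = g (k + 1) := by
      intro k hk
      simp only [Finset.mem_range] at hk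
      rw [hg, ← mul_assoc, ← pow_succ']
      congr 2
      omega
    have hB' : ∀ k ∈ Finset.range i, Yv * (Xv ^ k * Yv ^ (i + j - 1 - k)) = g k := by
      intro k hk
      simp only [Finset.mem_range] at hk
      rw [hg, mul_left_comm, ← pow_succ']
      congr 2
      omega
    rw [add_mul, Finset.mul_sum, Finset.mul_sum, Finset.sum_congr rfl hA',
      Finset.sum_congr rfl hB']
    have hA : ∑ k ∈ Finset.range (i + 1), g k
        = (∑ k ∈ Finset.range i, g (k + 1)) + g 0 := Finset.sum_range_succ' g i
    have hB : ∑ k ∈ Finset.range (i + 1), g k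
        = (∑ k ∈ Finset.range i, g k) + g i := Finset.sum_range_succ g i
    have hg0 : g 0 = Yv ^ (i + j) := by simp [hg]
    have hgi : g i = Xv ^ i * Yv ^ j := by simp [hg]
    set S := ∑ k ∈ Finset.range (i + 1), g k with hS
    rw [← hg0, ← hgi]
    linear_combination (-1 : MvPolynomial (Fin 2) (ZMod 2)) * hA - hB
      + (S - g 0 - g i) * h2
  -- monomial computation for (4)
  have mono4 : ∀ i j : ℕ, H (m (Xv ^ i * Yv ^ j)) = Xv ^ i * Yv ^ j := by
    intro i j
    have hsplit : m (Xv ^ i * Yv ^ j) = Xv ^ (i + 1) * Yv ^ j + Xv ^ i * Yv ^ (j + 1) := by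
      rw [hm]; ring
    rw [hsplit, map_add, hH, hH]
    set g : ℕ → MvPolynomial (Fin 2) (ZMod 2) := fun k => Xv ^ k * Yv ^ (i + j - k) with hg
    have e1 : ∀ k ∈ Finset.range (i + 1), Xv ^ k * Yv ^ (i + 1 + j - 1 - k) = g k := by
      intro k hk; simp only [Finset.mem_range] at hk
      have h' : i + 1 + j - 1 - k = i + j - k := by omega
      rw [hg, h']
    have e2 : ∀ k ∈ Finset.range i, Xv ^ k * Yv ^ (i + (j + 1) - 1 - k) = g k := by
      intro k hk; simp only [Finset.mem_range] at hk
      have h' : i + (j + 1) - 1 - k = i + j - k := by omega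
      rw [hg, h']
    rw [Finset.sum_congr rfl e1, Finset.sum_congr rfl e2, Finset.sum_range_succ g i]
    have hgi : g i = Xv ^ i * Yv ^ j := by simp [hg]
    rw [hgi]
    linear_combination (∑ k ∈ Finset.range i, g k) * h2
  -- (3)
  have p3 : ∀ t, m (H t) = t + koszulIncl (koszulEv t) := by
    intro t
    induction t using MvPolynomial.induction_on' with
    | monomial u a =>
      rw [koszul_monomial_eq, map_smul, map_smul, map_smul, map_smul, mono3, smul_add]
    | add p q hp hq =>
      rw [map_add, map_add, hp, hq, map_add, map_add]
      ring
  -- (4)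
  have p4 : ∀ t, H (m t) = t := by
    intro t
    induction t using MvPolynomial.induction_on' with
    | monomial u a => rw [koszul_monomial_eq, map_smul, map_smul, mono4]
    | add p q hp hq => rw [map_add, map_add, hp, hq]
  -- (5)
  have p5 : ∀ p, H (koszulIncl p) = 0 := by
    intro p
    induction p using Polynomial.induction_on' with
    | monomial n a =>
      have : koszulIncl (Polynomial.monomial n a) = a • (Xv ^ 0 * Yv ^ n) := by
        simp [koszulIncl, Polynomial.aeval_monomial, MvPolynomial.smul_eq_C_mul,
          MvPolynomial.algebraMap_eq]
      rw [this, map_smul, hH]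
      simp
    | add p q hp hq => rw [map_add, map_add, hp, hq, add_zero]
  exact ⟨p1, p2, p3, p4, p5, Function.LeftInverse.injective p4⟩
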